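/- Let μ ∈ ℝ, σ > 0, and let X₁, …, X_B be independent random variables each with law gaussianReal μ σ² (the normal distribution with mean μ and variance σ²). Then E[sign((1/B)·(X₁ + ⋯ + X_B))] = erf(√(B/2)·μ/σ), where erf(x) := (2/√π) ∫₀ˣ exp(−t²) dt and sign(x) is 1 for x > 0, −1 for x < 0, and 0 for x = 0. -/

import Mathlib

open MeasureTheory ProbabilityTheory

/-- The Gauss error function. -/
noncomputable def erf (x : ℝ) : ℝ :=
  (2 / Real.sqrt Real.pi) * ∫ t in (0 : ℝ)..x, Real.exp (-t ^ 2)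

/-!
The mini-batch mean of `B` independent `N(μ, σ²)` variables is `N(μ, σ²/B)`. For `Y ∼ N(m, v)`,
`E[sign Y] = P(Y > 0) - P(Y < 0)`, and the reflection `x ↦ 2m - x`, which preserves `N(m, v)`,
turns `P(Y < 0)` into `P(Y > 2m)`. Hence `E[sign Y]` is the (oriented) mass of `N(m, v)` between
`0` and `2m`, i.e. the mass of `N(0, v)` on `[-m, m]`, which the substitution `x = √(2v) t`
identifies with `erf (m / √(2v))`.
-/

open Real Set
open scoped NNReal

lemma Real.sign_eq_indicator_sub_indicator :
    Real.sign = (Ioi 0).indicator 1 - (Iio 0).indicator 1 := by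
  ext x
  rcases lt_trichotomy x 0 with h | rfl | h
  · simp [Real.sign_of_neg h, h, h.not_gt]
  · simp
  · simp [Real.sign_of_pos h, h, h.not_gt]

lemma Real.measurable_sign : Measurable Real.sign := by
  rw [Real.sign_eq_indicator_sub_indicator]
  exact (measurable_one.indicator measurableSet_Ioi).sub
    (measurable_one.indicator measurableSet_Iio)

lemma integral_sign {ν : Measure ℝ} [IsFiniteMeasure ν] :
    ∫ x, Real.sign x ∂ν = ν.real (Ioi 0) - ν.real (Iio 0) := by
  rw [Real.sign_eq_indicator_sub_indicator]
  simp only [Pi.sub_apply]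
  rw [integral_sub ((integrable_const 1).indicator measurableSet_Ioi)
      ((integrable_const 1).indicator measurableSet_Iio),
    integral_indicator_one measurableSet_Ioi, integral_indicator_one measurableSet_Iio]

lemma erf_eq_integral_neg_self (x : ℝ) :
    erf x = (√π)⁻¹ * ∫ t in -x..x, exp (-t ^ 2) := by
  have hcont : Continuous fun t : ℝ => exp (-t ^ 2) := by fun_prop
  have hsymm : ∫ t in -x..0, exp (-t ^ 2) = ∫ t in 0..x, exp (-t ^ 2) := by
    have := (intervalIntegral.integral_comp_neg (a := 0) (b := x) fun t => exp (-t ^ 2)).symm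
    simpa only [neg_zero, neg_sq] using this
  rw [erf, ← intervalIntegral.integral_add_adjacent_intervals (a := -x) (b := 0) (c := x)
    (hcont.intervalIntegrable _ _) (hcont.intervalIntegrable _ _), hsymm]
  ring

lemma integral_gaussianPDFReal_zero_neg_self {v : ℝ≥0} (hv : v ≠ 0) (a : ℝ) :
    ∫ x in -a..a, gaussianPDFReal 0 v x = erf (a / √(2 * v)) := by
  have hs : √(2 * v) ≠ 0 := by positivity
  have hpdf : ∀ x, gaussianPDFReal 0 v x = (√(2 * π * v))⁻¹ * exp (-(x / √(2 * v)) ^ 2) := by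
    intro x
    rw [gaussianPDFReal, div_pow, sq_sqrt (by positivity), sub_zero, neg_div]
  have hnorm : √(2 * π * v) = √π * √(2 * v) := by
    rw [mul_comm 2 π, mul_assoc, sqrt_mul pi_nonneg]
  simp_rw [hpdf]
  rw [intervalIntegral.integral_const_mul,
    intervalIntegral.integral_comp_div (fun x => exp (-x ^ 2)) hs, erf_eq_integral_neg_self,
    neg_div, smul_eq_mul, hnorm, mul_inv, mul_assoc, inv_mul_cancel_left₀ hs]

lemma gaussianReal_real_Iio_eq_real_Ioi (m : ℝ) (v : ℝ≥0) (a : ℝ) :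
    (gaussianReal m v).real (Iio a) = (gaussianReal m v).real (Ioi (2 * m - a)) := by
  have hrefl : (gaussianReal m v).map (2 * m - ·) = gaussianReal m v := by
    rw [gaussianReal_map_const_sub]; ring_nf
  have hpre : (2 * m - ·) ⁻¹' Iio a = Ioi (2 * m - a) := by
    ext x
    simp
  conv_lhs => rw [← hrefl, map_measureReal_apply (by fun_prop) measurableSet_Iio, hpre]

lemma gaussianReal_real_Ioi_sub_Ioi (m : ℝ) {v : ℝ≥0} (hv : v ≠ 0) (a b : ℝ) :
    (gaussianReal m v).real (Ioi a) - (gaussianReal m v).real (Ioi b)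
      = ∫ x in a..b, gaussianPDFReal m v x := by
  have hint := integrable_gaussianPDFReal m v
  simp only [measureReal_def, gaussianReal_apply_eq_integral m hv,
    ENNReal.toReal_ofReal (setIntegral_nonneg measurableSet_Ioi
      fun x _ => gaussianPDFReal_nonneg m v x)]
  exact intervalIntegral.integral_Ioi_sub_Ioi' hint.integrableOn hint.integrableOn

lemma integral_sign_gaussianReal (m : ℝ) {v : ℝ≥0} (hv : v ≠ 0) :
    ∫ x, Real.sign x ∂gaussianReal m v = erf (m / √(2 * v)) := by
  rw [integral_sign, gaussianReal_real_Iio_eq_real_Ioi, gaussianReal_real_Ioi_sub_Ioi m hv,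
    ← integral_gaussianPDFReal_zero_neg_self hv m]
  have := intervalIntegral.integral_comp_sub_right (gaussianPDFReal 0 v) (a := 0) (b := 2 * m) m
  simp_rw [gaussianPDFReal_sub, zero_add] at this
  rw [sub_zero, this]
  congr 1 <;> ring

lemma ProbabilityTheory.iIndepFun.map_sum_eq_gaussianReal {Ω ι : Type*} [MeasurableSpace Ω]
    {P : Measure Ω} [IsProbabilityMeasure P] {X : ι → Ω → ℝ} (hX : ∀ i, Measurable (X i))
    (hindep : iIndepFun X P) {m : ℝ} {v : ℝ≥0} (hlaw : ∀ i, P.map (X i) = gaussianReal m v)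
    (s : Finset ι) :
    P.map (∑ i ∈ s, X i) = gaussianReal (s.card * m) (s.card * v) := by
  induction s using Finset.cons_induction with
  | empty => simp [gaussianReal_zero_var, Pi.zero_def, Measure.map_const]
  | cons i s hi ih =>
    rw [Finset.sum_cons, gaussianReal_add_gaussianReal_of_indepFun
      (hindep.indepFun_finsetSum_of_notMem hX hi).symm (hlaw i) ih, Finset.card_cons]
    congr 1 <;> push_cast <;> ring

lemma ProbabilityTheory.iIndepFun.map_sampleMean_eq_gaussianReal {Ω ι : Type*} [Fintype ι]
    [Nonempty ι] [MeasurableSpace Ω] {P : Measure Ω} [IsProbabilityMeasure P] {X : ι → Ω → ℝ} (hX : ∀ i, Measurable (X i))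
    (hindep : iIndepFun X P) {m : ℝ} {v : ℝ≥0} (hlaw : ∀ i, P.map (X i) = gaussianReal m v) :
    P.map (fun ω => (Fintype.card ι : ℝ)⁻¹ * ∑ i, X i ω)
      = gaussianReal m (v / Fintype.card ι) := by
  have hn : (Fintype.card ι : ℝ) ≠ 0 := by positivity
  have hsum := hindep.map_sum_eq_gaussianReal hX hlaw Finset.univ
  rw [show (fun ω => (Fintype.card ι : ℝ)⁻¹ * ∑ i, X i ω)
      = ((Fintype.card ι : ℝ)⁻¹ * ·) ∘ ∑ i, X i by ext; simp,
    ← Measure.map_map (measurable_const_mul _) (by fun_prop), hsum, gaussianReal_map_const_mul]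
  congr 1
  · rw [Finset.card_univ, inv_mul_cancel_left₀ hn]
  · ext
    simp only [NNReal.coe_mul, NNReal.coe_mk, NNReal.coe_div, NNReal.coe_natCast, Finset.card_univ]
    field_simp

/-- The expected sign of the mini-batch mean of `B` i.i.d. Gaussian gradients with mean
`μ` and variance `σ²` equals `erf(√(B/2)·μ/σ)`. -/
theorem expectation_sign_sample_mean {Ω : Type*} [MeasureSpace Ω]
    [IsProbabilityMeasure (volume : Measure Ω)] (μ σ : ℝ) (hσ : 0 < σ)
    (B : ℕ) (hB : 0 < B) (X : Fin B → Ω → ℝ) (hX : ∀ i, Measurable (X i))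
    (hindep : iIndepFun X volume)
    (hlaw : ∀ i, Measure.map (X i) volume = gaussianReal μ ⟨σ ^ 2, sq_nonneg σ⟩) :
    ∫ ω, Real.sign ((1 / (B : ℝ)) * ∑ i, X i ω) =
      erf (Real.sqrt ((B : ℝ) / 2) * μ / σ) := by
  have : Nonempty (Fin B) := ⟨⟨0, hB⟩⟩
  have hmean := hindep.map_sampleMean_eq_gaussianReal hX hlaw
  rw [Fintype.card_fin, ← one_div] at hmean
  have hB' : (0 : ℝ) < B := by exact_mod_cast hB
  set v : ℝ≥0 := ⟨σ ^ 2, sq_nonneg σ⟩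
  have hvar_coe : ((v / B : ℝ≥0) : ℝ) = σ ^ 2 / B := by
    rw [NNReal.coe_div, NNReal.coe_natCast]
    rfl
  have hvar : v / B ≠ 0 := by
    rw [ne_eq, ← NNReal.coe_eq_zero, hvar_coe]
    positivity
  rw [← integral_map (by fun_prop) Real.measurable_sign.aestronglyMeasurable, hmean,
    integral_sign_gaussianReal μ hvar, hvar_coe,
    show 2 * (σ ^ 2 / B) = σ ^ 2 / (B / 2) by ring, sqrt_div' _ (by positivity), sqrt_sq hσ.le]
  field_simp
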